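/- Let f : ℝ^d → ℝ be differentiable, convex, and L-smooth with L > 0, and let η ∈ (0, 1/((L+1)·S·Q)]. Fix a point θ ∈ ℝ^d, an integer Γ ≥ 1, and block sequences k_γ^0,…,k_γ^{S−1} ∈ K for γ = 1,…,Γ. For each γ, let θ_γ be the final iterate of Markov chain coordinate descent started at θ with step size η, block sequence (k_γ^s), and Q inner updates per block, and set θ⁺ := (1/Γ)·∑_{γ=1}^{Γ} θ_γ. Then f(θ⁺) − f(θ) ≤ η·S·Q·C₁·(1 + η·(L+1)·S·Q·C₁)·‖∇f(θ)‖² + (η·(η·(L+1)·S·Q − 1)/Γ)·∑_{γ=1}^{Γ} ∑_{s=0}^{S−1} ∑_{q=0}^{Q−1} ‖∇_{k_γ^s} f(θ)‖², where C₁ := η·e·L·S·Q. -/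

import Mathlib

/-!
A run of `T = S Q` block steps moves by `η` times a block of a gradient, and `η L T ≤ 1`, so a
discrete Grönwall estimate keeps every iterate within `η e T ‖∇f(θ)‖` of `θ`; by smoothness each
block gradient actually used is then within `C₁ ‖∇f(θ)‖` of the same block of `∇f(θ)`. Feeding
the total displacement `-η ∑ₜ ∇̄_{kₜ} f(uₜ)` into the descent lemma
`f y ≤ f x + ⟪∇f x, y - x⟫ + L/2 ‖y - x‖²` bounds the change of `f` along one run, and Jensen's
inequality passes the average of these bounds to the averaged iterate `θ⁺`.
-/

/-- For a block `k` (blocks given by the assignment `blk : Fin d → K` of coordinates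
to blocks), the vector `∇̄_k f(v)` agreeing with the gradient of `f` at `v` on the
coordinates of block `k` and zero elsewhere.  Note `‖maskedGrad blk f v k‖ = ‖∇_k f(v)‖`. -/
noncomputable def maskedGrad {d : ℕ} {K : Type*} [DecidableEq K]
    (blk : Fin d → K) (f : EuclideanSpace ℝ (Fin d) → ℝ)
    (v : EuclideanSpace ℝ (Fin d)) (k : K) : EuclideanSpace ℝ (Fin d) :=
  WithLp.toLp 2 (fun i => if blk i = k then gradient f v i else 0)

open RealInnerProductSpace Finset

namespace EuclideanSpace
variable {ι : Type*}

noncomputable def mask (p : ι → Prop) [DecidablePred p] (x : EuclideanSpace ℝ ι) :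
    EuclideanSpace ℝ ι :=
  WithLp.toLp 2 fun i => if p i then x i else 0

variable (p : ι → Prop) [DecidablePred p]

theorem mask_sub (x y : EuclideanSpace ℝ ι) : mask p (x - y) = mask p x - mask p y := by
  ext i; by_cases h : p i <;> simp [mask, h]

theorem norm_mask_le [Fintype ι] (x : EuclideanSpace ℝ ι) : ‖mask p x‖ ≤ ‖x‖ := by
  simp only [EuclideanSpace.norm_eq]
  gcongr with i
  by_cases h : p i <;> simp [mask, h]

theorem inner_mask_self [Fintype ι] (x : EuclideanSpace ℝ ι) :
    ⟪x, mask p x⟫ = ‖mask p x‖ ^ 2 := by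
  rw [← real_inner_self_eq_norm_sq]
  simp only [PiLp.inner_apply]
  refine sum_congr rfl fun i _ => ?_
  by_cases h : p i <;> simp [mask, h]

end EuclideanSpace

theorem maskedGrad_eq_mask {d : ℕ} {K : Type*} [DecidableEq K] (blk : Fin d → K)
    (f : EuclideanSpace ℝ (Fin d) → ℝ) (v : EuclideanSpace ℝ (Fin d)) (k : K) :
    maskedGrad blk f v k = EuclideanSpace.mask (blk · = k) (gradient f v) := rfl

theorem descent_lemma {E : Type*} [NormedAddCommGroup E] [InnerProductSpace ℝ E]
    [CompleteSpace E] {f : E → ℝ} {L : ℝ} (hdiff : Differentiable ℝ f)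
    (hsmooth : ∀ x y, ‖gradient f x - gradient f y‖ ≤ L * ‖x - y‖) (x y : E) :
    f y ≤ f x + ⟪gradient f x, y - x⟫ + L / 2 * ‖y - x‖ ^ 2 := by
  set u := y - x
  let h : ℝ → ℝ := fun t => f (x + t • u) - t * ⟪gradient f x, u⟫ - L / 2 * t ^ 2 * ‖u‖ ^ 2
  have hderiv : ∀ t, HasDerivAt h
      (⟪gradient f (x + t • u), u⟫ - ⟪gradient f x, u⟫ - L * t * ‖u‖ ^ 2) t := by
    intro t
    have hline : HasDerivAt (fun t : ℝ => x + t • u) u t := by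
      simpa using ((hasDerivAt_id t).smul_const u).const_add x
    have hf := (hdiff (x + t • u)).hasGradientAt.hasFDerivAt.comp_hasDerivAt t hline
    refine ((hf.sub ((hasDerivAt_id t).mul_const ⟪gradient f x, u⟫)).sub
      (((hasDerivAt_pow 2 t).const_mul (L / 2)).mul_const (‖u‖ ^ 2))).congr_deriv ?_
    simp only [InnerProductSpace.toDual_apply_apply, one_mul]
    push_cast
    ring
  have hanti : AntitoneOn h (Set.Ici 0) := by
    refine antitoneOn_of_deriv_nonpos (convex_Ici 0)
      (fun t _ => (hderiv t).continuousAt.continuousWithinAt)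
      (fun t _ => (hderiv t).differentiableAt.differentiableWithinAt) ?_
    intro t ht
    rw [interior_Ici, Set.mem_Ioi] at ht
    rw [(hderiv t).deriv, ← inner_sub_left]
    calc ⟪gradient f (x + t • u) - gradient f x, u⟫ - L * t * ‖u‖ ^ 2
        ≤ L * ‖x + t • u - x‖ * ‖u‖ - L * t * ‖u‖ ^ 2 := by
          gcongr
          exact (real_inner_le_norm _ _).trans
            (mul_le_mul_of_nonneg_right (hsmooth _ _) (norm_nonneg u))
      _ = 0 := by
          rw [add_sub_cancel_left, norm_smul, Real.norm_of_nonneg ht.le]; ring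
  have h10 := hanti Set.self_mem_Ici (Set.mem_Ici.mpr zero_le_one) zero_le_one
  simp only [h, one_smul, zero_smul, add_zero, add_sub_cancel, u] at h10
  linarith

theorem le_mul_mul_exp_of_le_one_add_mul_add {x : ℕ → ℝ} {a b : ℝ} {T : ℕ} (ha : 0 ≤ a)
    (hb : 0 ≤ b) (h0 : x 0 = 0) (hstep : ∀ t < T, x (t + 1) ≤ (1 + a) * x t + b) :
    ∀ t ≤ T, x t ≤ b * t * Real.exp (a * t) := by
  intro t
  induction t with
  | zero => simp [h0]
  | succ t ih =>
    intro ht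
    have hB : 0 ≤ b * t * Real.exp (a * t) := by positivity
    calc x (t + 1) ≤ (1 + a) * x t + b := hstep t ht
      _ ≤ Real.exp a * (b * t * Real.exp (a * t)) + b * Real.exp (a * (t + 1)) := by
          refine add_le_add ?_ (le_mul_of_one_le_right hb (Real.one_le_exp (by positivity)))
          calc (1 + a) * x t ≤ (1 + a) * (b * t * Real.exp (a * t)) := by
                gcongr; exact ih (by omega)
            _ ≤ Real.exp a * (b * t * Real.exp (a * t)) := by
                gcongr; linarith [Real.add_one_le_exp a]
      _ = b * ↑(t + 1) * Real.exp (a * ↑(t + 1)) := by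
          rw [mul_left_comm, ← Real.exp_add]; push_cast; ring_nf

theorem norm_le_of_inner_eq_norm_sq {E : Type*} [NormedAddCommGroup E] [InnerProductSpace ℝ E]
    {a p : E} (h : ⟪a, p⟫ = ‖p‖ ^ 2) : ‖p‖ ≤ ‖a‖ := by
  have := h ▸ real_inner_le_norm a p
  nlinarith [norm_nonneg a, norm_nonneg p]

theorem inner_sum_ge_of_norm_sub_le {E : Type*} [NormedAddCommGroup E] [InnerProductSpace ℝ E]
    {T : ℕ} {a : E} {g d : ℕ → E} {c : ℝ}
    (hg : ∀ t < T, ⟪a, g t⟫ = ‖g t‖ ^ 2) (hd : ∀ t < T, ‖d t - g t‖ ≤ c) :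
    ∑ t ∈ range T, ‖g t‖ ^ 2 - T * (‖a‖ * c) ≤ ⟪a, ∑ t ∈ range T, d t⟫ := by
  have hconst : (T : ℝ) * (‖a‖ * c) = ∑ _t ∈ range T, ‖a‖ * c := by simp
  rw [inner_sum, hconst, ← sum_sub_distrib]
  refine sum_le_sum fun t ht => ?_
  rw [mem_range] at ht
  have hdg := (abs_le.mp (abs_real_inner_le_norm a (d t - g t))).1
  rw [inner_sub_right, hg t ht] at hdg
  nlinarith [hd t ht, norm_nonneg a]

theorem norm_sum_sq_le_of_norm_sub_le {E : Type*} [SeminormedAddCommGroup E] {T : ℕ}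
    {g d : ℕ → E} {c : ℝ} (hd : ∀ t < T, ‖d t - g t‖ ≤ c) :
    ‖∑ t ∈ range T, d t‖ ^ 2 ≤ 2 * T * (∑ t ∈ range T, ‖g t‖ ^ 2 + T * c ^ 2) := by
  have hc : ∀ t < T, ‖d t‖ ^ 2 ≤ 2 * (‖g t‖ ^ 2 + c ^ 2) := fun t ht => by
    have h : ‖d t‖ ≤ ‖g t‖ + c := by
      linarith [norm_le_insert' (d t) (g t), hd t ht]
    grw [h]
    exact add_sq_le
  calc ‖∑ t ∈ range T, d t‖ ^ 2 ≤ (∑ t ∈ range T, ‖d t‖) ^ 2 := by grw [norm_sum_le]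
    _ ≤ T * ∑ t ∈ range T, ‖d t‖ ^ 2 := by
        simpa using sq_sum_le_card_mul_sum_sq (s := range T) (f := fun t => ‖d t‖)
    _ ≤ T * ∑ t ∈ range T, 2 * (‖g t‖ ^ 2 + c ^ 2) := by
        gcongr with t ht; exact hc t (mem_range.mp ht)
    _ = 2 * T * (∑ t ∈ range T, ‖g t‖ ^ 2 + T * c ^ 2) := by
        rw [← mul_sum, sum_add_distrib, sum_const, card_range, nsmul_eq_mul]; ring

section BlockDescent

variable {E : Type*} [NormedAddCommGroup E] [InnerProductSpace ℝ E] [CompleteSpace E]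
  {f : E → ℝ} {L η : ℝ} {P : ℕ → E → E} {θ : E} {u : ℕ → E} {T : ℕ}

theorem norm_iterate_sub_le (hL : 0 ≤ L) (hη : 0 ≤ η)
    (hsmooth : ∀ x y, ‖gradient f x - gradient f y‖ ≤ L * ‖x - y‖)
    (hP : ∀ t a, ‖P t a‖ ≤ ‖a‖) (h0 : u 0 = θ)
    (hrec : ∀ t < T, u (t + 1) = u t - η • P t (gradient f (u t))) :
    ∀ t ≤ T, ‖u t - θ‖ ≤ η * ‖gradient f θ‖ * t * Real.exp (η * L * t) := by
  refine le_mul_mul_exp_of_le_one_add_mul_add (x := fun t => ‖u t - θ‖)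
    (mul_nonneg hη hL) (by positivity) (by simp [h0]) fun t ht => ?_
  have hgrad : ‖gradient f (u t)‖ ≤ ‖gradient f θ‖ + L * ‖u t - θ‖ := by
    linarith [norm_sub_norm_le (gradient f (u t)) (gradient f θ), hsmooth (u t) θ]
  calc ‖u (t + 1) - θ‖ = ‖(u t - θ) - η • P t (gradient f (u t))‖ := by
        rw [hrec t ht, sub_right_comm]
    _ ≤ ‖u t - θ‖ + η * ‖gradient f (u t)‖ := by
        grw [norm_sub_le, norm_smul, Real.norm_of_nonneg hη, hP]
    _ ≤ (1 + η * L) * ‖u t - θ‖ + η * ‖gradient f θ‖ := by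
        grw [hgrad]; linarith

theorem block_descent_bound (hL : 0 ≤ L) (hη : 0 ≤ η) (hηT : η * (L + 1) * T ≤ 1)
    (hdiff : Differentiable ℝ f)
    (hsmooth : ∀ x y, ‖gradient f x - gradient f y‖ ≤ L * ‖x - y‖)
    (hP_lip : ∀ t a b, ‖P t a - P t b‖ ≤ ‖a - b‖) (hP_inner : ∀ t a, ⟪a, P t a⟫ = ‖P t a‖ ^ 2)
    (h0 : u 0 = θ) (hrec : ∀ t < T, u (t + 1) = u t - η • P t (gradient f (u t))) :
    f (u T) - f θ
      ≤ η * T * (η * Real.exp 1 * L * T) * (1 + η * (L + 1) * T * (η * Real.exp 1 * L * T))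
          * ‖gradient f θ‖ ^ 2
        + η * (η * (L + 1) * T - 1) * ∑ t ∈ range T, ‖P t (gradient f θ)‖ ^ 2 := by
  set G := ‖gradient f θ‖
  set C := η * Real.exp 1 * L * T
  set M := ∑ t ∈ range T, ‖P t (gradient f θ)‖ ^ 2
  set D := ∑ t ∈ range T, P t (gradient f (u t))
  have hdrift := norm_iterate_sub_le hL hη hsmooth
    (fun t a => norm_le_of_inner_eq_norm_sq (hP_inner t a)) h0 hrec
  have herr : ∀ t < T, ‖P t (gradient f (u t)) - P t (gradient f θ)‖ ≤ C * G := by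
    intro t ht
    have htT : (t : ℝ) ≤ T := by exact_mod_cast ht.le
    have hexp : Real.exp (η * L * t) ≤ Real.exp 1 := by
      gcongr
      nlinarith [mul_nonneg (mul_nonneg hη hL) (Nat.cast_nonneg (α := ℝ) t),
        mul_le_mul_of_nonneg_left htT (mul_nonneg hη (by linarith : 0 ≤ L + 1))]
    calc ‖P t (gradient f (u t)) - P t (gradient f θ)‖ ≤ L * ‖u t - θ‖ :=
          (hP_lip _ _ _).trans (hsmooth _ _)
      _ ≤ L * (η * G * T * Real.exp 1) := by
          grw [hdrift t ht.le, hexp, htT]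
      _ = C * G := by ring
  have huT : u T - θ = -(η • D) := by
    rw [← h0, ← sum_range_sub]
    simp only [D, smul_sum, ← sum_neg_distrib]
    exact sum_congr rfl fun t ht => by rw [hrec t (mem_range.mp ht)]; abel
  have hinner : M - T * (G * (C * G)) ≤ ⟪gradient f θ, D⟫ :=
    inner_sum_ge_of_norm_sub_le (fun t _ => hP_inner t _) herr
  have hnorm : ‖D‖ ^ 2 ≤ 2 * T * (M + T * (C * G) ^ 2) := norm_sum_sq_le_of_norm_sub_le herr
  have hdesc := descent_lemma hdiff hsmooth θ (u T)
  rw [huT, inner_neg_right, real_inner_smul_right, norm_neg, norm_smul, Real.norm_of_nonneg hη]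
    at hdesc
  have e1 : η * (M - T * (G * (C * G))) ≤ η * ⟪gradient f θ, D⟫ :=
    mul_le_mul_of_nonneg_left hinner hη
  have e2 : L / 2 * (η * ‖D‖) ^ 2 ≤ L / 2 * η ^ 2 * (2 * T * (M + T * (C * G) ^ 2)) := by
    rw [mul_pow, ← mul_assoc]; gcongr
  have hM : 0 ≤ M := sum_nonneg fun t _ => sq_nonneg _
  have slack1 : 0 ≤ η ^ 2 * T ^ 2 * C ^ 2 * G ^ 2 := by positivity
  have slack2 : 0 ≤ η ^ 2 * T * M := by positivity
  linarith

end BlockDescent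

theorem ConvexOn.map_average_sub_le {E : Type*} [AddCommGroup E] [Module ℝ E] {f : E → ℝ}
    (hf : ConvexOn ℝ Set.univ f) {n : ℕ} (hn : n ≠ 0) {x : Fin n → E} {y : E} {R a : ℝ}
    {w : Fin n → ℝ} (h : ∀ i, f (x i) - f y ≤ R + a * w i) :
    f ((n : ℝ)⁻¹ • ∑ i, x i) - f y ≤ R + a / n * ∑ i, w i := by
  have hn' : (n : ℝ) ≠ 0 := Nat.cast_ne_zero.mpr hn
  have hjensen : f (∑ i, (n : ℝ)⁻¹ • x i) ≤ ∑ i, (n : ℝ)⁻¹ • f (x i) :=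
    hf.map_sum_le (fun _ _ => by positivity) (by simp [hn']) (fun _ _ => Set.mem_univ _)
  rw [smul_sum]
  calc f (∑ i, (n : ℝ)⁻¹ • x i) - f y ≤ (n : ℝ)⁻¹ * ∑ i, (f (x i) - f y) := by
        rw [sum_sub_distrib, sum_const, card_univ, Fintype.card_fin, nsmul_eq_mul, mul_sub,
          ← smul_eq_mul, smul_sum, inv_mul_cancel_left₀ hn']
        linarith
    _ ≤ (n : ℝ)⁻¹ * ∑ i, (R + a * w i) := by gcongr with i; exact h i
    _ = R + a / n * ∑ i, w i := by
        rw [sum_add_distrib, sum_const, card_univ, Fintype.card_fin, nsmul_eq_mul, ← mul_sum]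
        field_simp

theorem div_mod_step_of_nested_step {α : Type*} {F : ℕ → α → α} {S Q : ℕ} {v : ℕ → ℕ → α}
    (hinner : ∀ s < S, ∀ q < Q, v s (q + 1) = F s (v s q))
    (houter : ∀ s < S, v (s + 1) 0 = v s Q) {t : ℕ} (ht : t < S * Q) :
    v ((t + 1) / Q) ((t + 1) % Q) = F (t / Q) (v (t / Q) (t % Q)) := by
  have hQ : 0 < Q := Nat.pos_of_ne_zero (by rintro rfl; simp at ht)
  obtain ⟨s, q, hq, rfl⟩ : ∃ s q, q < Q ∧ t = Q * s + q :=
    ⟨t / Q, t % Q, Nat.mod_lt _ hQ, (Nat.div_add_mod t Q).symm⟩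
  have hs : s < S := by nlinarith
  have hdm : ∀ r < Q, (Q * s + r) / Q = s ∧ (Q * s + r) % Q = r := fun r hr =>
    ⟨by rw [Nat.mul_add_div hQ, Nat.div_eq_of_lt hr, add_zero], by simp [Nat.mod_eq_of_lt hr]⟩
  rw [(hdm q hq).1, (hdm q hq).2, add_assoc]
  rcases (Nat.add_one_le_of_lt hq).lt_or_eq with hq1 | hq1
  · rw [(hdm _ hq1).1, (hdm _ hq1).2, hinner s hs q hq]
  · rw [hq1, ← Nat.mul_succ, Nat.mul_div_cancel_left _ hQ, Nat.mul_mod_right, houter s hs,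
      ← hq1, hinner s hs q hq]

theorem Finset.sum_range_mul_div {M : Type*} [AddCommMonoid M] (h : ℕ → M) (S Q : ℕ) :
    ∑ t ∈ range (S * Q), h (t / Q) = ∑ s ∈ range S, ∑ _q ∈ range Q, h s := by
  induction S with
  | zero => simp
  | succ S ih =>
    rw [sum_range_succ, ← ih, Nat.succ_mul, sum_range_add]
    congr 1
    refine sum_congr rfl fun q hq => ?_
    rw [mem_range] at hq
    rw [mul_comm, Nat.mul_add_div (by omega), Nat.div_eq_of_lt hq, add_zero]

theorem mtcd_overlapping_tokens_descent_bound_general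
    {d : ℕ} {K : Type*} [DecidableEq K]
    (blk : Fin d → K)
    (f : EuclideanSpace ℝ (Fin d) → ℝ) (L : ℝ) (hL : 0 < L)
    (hdiff : Differentiable ℝ f)
    (hconvex : ∀ x y : EuclideanSpace ℝ (Fin d), ∀ a : ℝ, 0 ≤ a → a ≤ 1 →
      f (a • x + (1 - a) • y) ≤ a * f x + (1 - a) * f y)
    (hsmooth : ∀ x y : EuclideanSpace ℝ (Fin d),
      ‖gradient f x - gradient f y‖ ≤ L * ‖x - y‖)
    (S Q : ℕ)
    (η : ℝ) (hη : 0 < η) (hηub : η ≤ 1 / ((L + 1) * S * Q))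
    (θ : EuclideanSpace ℝ (Fin d))
    (Γ : ℕ) (hΓ : 1 ≤ Γ)
    (kγ : Fin Γ → ℕ → K)
    (v : Fin Γ → ℕ → ℕ → EuclideanSpace ℝ (Fin d))
    (hinit : ∀ γ, v γ 0 0 = θ)
    (hrecq : ∀ γ, ∀ s < S, ∀ q < Q,
      v γ s (q + 1) = v γ s q - η • maskedGrad blk f (v γ s q) (kγ γ s))
    (hrecs : ∀ γ, ∀ s < S, v γ (s + 1) 0 = v γ s Q)
    (θplus : EuclideanSpace ℝ (Fin d))
    (hθplus : θplus = (Γ : ℝ)⁻¹ • ∑ γ : Fin Γ, v γ S 0)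
    (C₁ : ℝ) (hC₁ : C₁ = η * Real.exp 1 * L * S * Q) :
    f θplus - f θ
      ≤ η * S * Q * C₁ * (1 + η * (L + 1) * S * Q * C₁) * ‖gradient f θ‖ ^ 2
        + η * (η * (L + 1) * S * Q - 1) / Γ *
            ∑ γ : Fin Γ, ∑ s ∈ Finset.range S, ∑ q ∈ Finset.range Q,
              ‖maskedGrad blk f θ (kγ γ s)‖ ^ 2 := by
  have hconv : ConvexOn ℝ Set.univ f := ⟨convex_univ, fun x _ y _ a b ha hb hab => by
    simpa [← hab] using hconvex x y a ha (by linarith)⟩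
  have hpos : 0 < (L + 1) * S * Q := by
    by_contra h
    linarith [one_div_nonpos.mpr (not_lt.mp h)]
  have hQ : 0 < Q := Nat.pos_of_ne_zero (by rintro rfl; simp at hpos)
  have hηT : η * (L + 1) * ↑(S * Q) ≤ 1 := by
    rw [le_div_iff₀ hpos] at hηub; push_cast; linarith
  rw [hθplus, hC₁]
  refine hconv.map_average_sub_le (by omega) fun γ => ?_
  have hrun := block_descent_bound (u := fun t => v γ (t / Q) (t % Q))
    (P := fun t => EuclideanSpace.mask (blk · = kγ γ (t / Q))) hL.le hη.le hηT hdiff hsmooth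
    (fun t a b => by rw [← EuclideanSpace.mask_sub]; exact EuclideanSpace.norm_mask_le _ _)
    (fun t a => EuclideanSpace.inner_mask_self _ _) (by simpa using hinit γ)
    (fun t ht => div_mod_step_of_nested_step (F := fun s x => x - η • maskedGrad blk f x (kγ γ s))
      (hrecq γ) (hrecs γ) ht)
  simp only [← maskedGrad_eq_mask, Nat.mul_div_cancel _ hQ, Nat.mul_mod_left,
    sum_range_mul_div (fun s => ‖maskedGrad blk f θ (kγ γ s)‖ ^ 2)] at hrun
  push_cast at hrun
  exact hrun.trans_eq (by ring)

/-- **Descent bound for parallel (overlapping-token) Markov chain coordinate descent.**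
`Γ ≥ 1` coordinate-descent runs start from the same point `θ`, each with its own block
sequence `k_γ^0,…,k_γ^{S−1}`, producing final iterates `v γ S 0`;
`θ⁺` is their average.  For convex `L`-smooth `f` with `η ∈ (0, 1/((L+1)SQ)]`,
`f(θ⁺) − f(θ) ≤ η S Q C₁ (1 + η(L+1)SQC₁)‖∇f(θ)‖²
  + (η(η(L+1)SQ − 1)/Γ) ∑_γ ∑_{s<S} ∑_{q<Q} ‖∇_{k_γ^s} f(θ)‖²` with `C₁ = η e L S Q`. -/
theorem mtcd_overlapping_tokens_descent_bound
    {d : ℕ} (hd : 1 ≤ d) {K : Type*} [Fintype K] [DecidableEq K]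
    (blk : Fin d → K)
    (f : EuclideanSpace ℝ (Fin d) → ℝ) (L : ℝ) (hL : 0 < L)
    (hdiff : Differentiable ℝ f)
    (hconvex : ∀ x y : EuclideanSpace ℝ (Fin d), ∀ a : ℝ, 0 ≤ a → a ≤ 1 →
      f (a • x + (1 - a) • y) ≤ a * f x + (1 - a) * f y)
    (hsmooth : ∀ x y : EuclideanSpace ℝ (Fin d),
      ‖gradient f x - gradient f y‖ ≤ L * ‖x - y‖)
    (S Q : ℕ) (hS : 1 ≤ S) (hQ : 1 ≤ Q)
    (η : ℝ) (hη : 0 < η) (hηub : η ≤ 1 / ((L + 1) * S * Q))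
    (θ : EuclideanSpace ℝ (Fin d))
    (Γ : ℕ) (hΓ : 1 ≤ Γ)
    (kγ : Fin Γ → ℕ → K)
    (v : Fin Γ → ℕ → ℕ → EuclideanSpace ℝ (Fin d))
    (hinit : ∀ γ, v γ 0 0 = θ)
    (hrecq : ∀ γ, ∀ s < S, ∀ q < Q,
      v γ s (q + 1) = v γ s q - η • maskedGrad blk f (v γ s q) (kγ γ s))
    (hrecs : ∀ γ, ∀ s < S, v γ (s + 1) 0 = v γ s Q)
    (θplus : EuclideanSpace ℝ (Fin d))
    (hθplus : θplus = (Γ : ℝ)⁻¹ • ∑ γ : Fin Γ, v γ S 0)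
    (C₁ : ℝ) (hC₁ : C₁ = η * Real.exp 1 * L * S * Q) :
    f θplus - f θ
      ≤ η * S * Q * C₁ * (1 + η * (L + 1) * S * Q * C₁) * ‖gradient f θ‖ ^ 2
        + η * (η * (L + 1) * S * Q - 1) / Γ *
            ∑ γ : Fin Γ, ∑ s ∈ Finset.range S, ∑ q ∈ Finset.range Q,
              ‖maskedGrad blk f θ (kγ γ s)‖ ^ 2 :=
  mtcd_overlapping_tokens_descent_bound_general blk f L hL hdiff hconvex hsmooth S Q η hη hηub θ Γ
    hΓ kγ v hinit hrecq hrecs θplus hθplus C₁ hC₁
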